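/- For any generator enriched lattice (L,G), the rank generating function of the minor poset satisfies F(M(L,G); q) = 1 + q · Σ_{ℓ∈L} (1+q)^{α(ℓ)}, where α(ℓ) = |{g∨ℓ : g ∈ G} \ {ℓ}|. -/

import Mathlib

open Finset

/-- A generator-enriched lattice datum inside an ambient lattice `L`:
a minimal element `z` together with a finite generating set of elements
strictly above `z`. The underlying set of elements consists of all joins
of `z` with subsets of the generating set. -/
structure GEL (L : Type*) [Lattice L] [DecidableEq L] where
  z : L
  gens : Finset L
  lt_gens : ∀ g ∈ gens, z < g

namespace GEL

variable {L K : Type*} [Lattice L] [OrderBot L] [DecidableEq L]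

/-- The underlying set of elements of a generator enriched lattice. -/
def carrier (M : GEL L) : Finset L :=
  M.gens.powerset.image fun X => X.sup id ⊔ M.z

/-- Deletion of a set of generators. -/
def delete (M : GEL L) (I : Finset L) : GEL L :=
  ⟨M.z, M.gens \ I, fun g hg => M.lt_gens g (Finset.mem_sdiff.mp hg).1⟩

/-- Restriction to a set of generators. -/
def restrict (M : GEL L) (I : Finset L) : GEL L :=
  M.delete (M.gens \ I)

/-- Contraction by a set of generators. -/
def contract (M : GEL L) (I : Finset L) : GEL L :=
  ⟨I.sup id ⊔ M.z,
   (M.gens.image fun g => g ⊔ (I.sup id ⊔ M.z)).erase (I.sup id ⊔ M.z),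
   fun g hg => by
     obtain ⟨hne, hg'⟩ := Finset.mem_erase.mp hg
     obtain ⟨h, -, rfl⟩ := Finset.mem_image.mp hg'
     exact lt_of_le_of_ne le_sup_right (Ne.symm hne)⟩

open Classical in
/-- Contraction by an element: contract by all generators below it. -/
noncomputable def contractEl (M : GEL L) (ℓ : L) : GEL L :=
  M.contract (M.gens.filter fun g => g ≤ ℓ)

/-- A single deletion or contraction step. -/
def Step (M N : GEL L) : Prop :=
  ∃ I ⊆ M.gens, N = M.delete I ∨ N = M.contract I

/-- `Minor M N` : `N` is a minor of `M`, i.e. obtained from `M` by a finite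
sequence of deletions and contractions. -/
def Minor (M N : GEL L) : Prop :=
  Relation.ReflTransGen Step M N

/-- The generator enriched lattice on a lattice with `⊥`, with the given generating set. -/
def ofGens (G : Finset L) (hG : ∀ g ∈ G, (⊥ : L) < g) : GEL L :=
  ⟨⊥, G, hG⟩

/-- The underlying type of the minor poset of `T`: all minors of `T`
together with an adjoined minimum `none`. -/
abbrev MP (T : GEL L) := Option {M : GEL L // T.Minor M}

/-- The order relation of the minor poset. -/
def mple (T : GEL L) : MP T → MP T → Prop
  | none, _ => True
  | some _, none => False
  | some A, some B => B.1.Minor A.1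

/-- The rank function of the minor poset. -/
def mrank (T : GEL L) : MP T → ℕ
  | none => 0
  | some A => A.1.gens.card + 1

/-- A parallel: an element `ℓ` and distinct generators `g, h` with
`g ⊔ ℓ = h ⊔ ℓ ≠ ℓ`. -/
def HasParallel (M : GEL L) : Prop :=
  ∃ ℓ ∈ M.carrier, ∃ g ∈ M.gens, ∃ h ∈ M.gens,
    g ≠ h ∧ g ⊔ ℓ = h ⊔ ℓ ∧ g ⊔ ℓ ≠ ℓ

/-- Isomorphism of generator enriched lattices: a join-preserving bijection of the
underlying sets carrying the generating set onto the generating set. -/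
def GIso [Lattice K] [OrderBot K] [DecidableEq K] (M : GEL L) (N : GEL K) : Prop :=
  ∃ f : L → K, Set.BijOn f ↑M.carrier ↑N.carrier ∧
    (∀ a ∈ M.carrier, ∀ b ∈ M.carrier, f (a ⊔ b) = f a ⊔ f b) ∧
    f '' ↑M.gens = ↑N.gens

open Classical in
/-- The image generator enriched lattice `⟨f(I) | f(z)⟩` of a strong map. -/
noncomputable def map [Lattice K] [DecidableEq K] (f : L → K) (M : GEL L) : GEL K :=
  ⟨f M.z, (M.gens.image f).filter fun y => f M.z < y,
   fun g hg => (Finset.mem_filter.mp hg).2⟩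

/-- `T` lifts join irreducibles: for every `ℓ` and generator `g` with `g ≰ ℓ`,
the element `g ⊔ ℓ` is join irreducible in the interval `[ℓ, ⊤]`. -/
def LiftsJI (T : GEL L) : Prop :=
  ∀ ℓ : L, ∀ g ∈ T.gens, ¬ g ≤ ℓ →
    ∀ a b : L, ℓ ≤ a → ℓ ≤ b → g ⊔ ℓ = a ⊔ b → g ⊔ ℓ = a ∨ g ⊔ ℓ = b

end GEL

/-! A minor is determined by its minimum `ℓ` and its generating set `H`, and
`H ⊆ {g ⊔ ℓ | g ∈ G} \ {ℓ}`: deletion shrinks `H`, and contraction to `ℓ'` replaces each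
`h ∈ H` by `h ⊔ ℓ'`. Conversely, if `ℓ` is a join of generators, contracting them and then
deleting reaches every such `H`. Hence the elements of rank `k + 1` number
`∑ ℓ, (α(ℓ) choose k)`, the coefficient of `q^(k+1)` in `q ∑ ℓ, (1 + q)^α(ℓ)`. -/

namespace GEL

section Lifted

variable {L : Type*} [Lattice L] [DecidableEq L]

/-- The paper's `α(ℓ)` is the cardinality of this set. -/
def liftedGens (T : GEL L) (ℓ : L) : Finset L :=
  (T.gens.image fun g => g ⊔ ℓ).erase ℓ

theorem lt_of_mem_liftedGens {T : GEL L} {ℓ g : L} (hg : g ∈ T.liftedGens ℓ) : ℓ < g := by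
  obtain ⟨hne, hg'⟩ := mem_erase.mp hg
  obtain ⟨h, -, rfl⟩ := mem_image.mp hg'
  exact lt_of_le_of_ne le_sup_right (Ne.symm hne)

theorem gens_subset_liftedGens (T : GEL L) : T.gens ⊆ T.liftedGens T.z := fun g hg =>
  mem_erase.mpr ⟨(T.lt_gens g hg).ne',
    mem_image.mpr ⟨g, hg, sup_eq_left.mpr (T.lt_gens g hg).le⟩⟩

theorem sup_mem_liftedGens {T : GEL L} {ℓ ℓ' h : L} (hℓ : ℓ ≤ ℓ') (hh : h ∈ T.liftedGens ℓ)
    (hne : h ⊔ ℓ' ≠ ℓ') : h ⊔ ℓ' ∈ T.liftedGens ℓ' := by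
  obtain ⟨g, hg, rfl⟩ := mem_image.mp (mem_erase.mp hh).2
  refine mem_erase.mpr ⟨hne, mem_image.mpr ⟨g, hg, ?_⟩⟩
  rw [sup_assoc, sup_eq_right.mpr hℓ]

theorem ext {M N : GEL L} (hz : M.z = N.z) (hgens : M.gens = N.gens) : M = N := by
  cases M; cases N; simp_all

end Lifted

variable {L : Type*} [Lattice L] [OrderBot L] [DecidableEq L]

theorem contract_gens (M : GEL L) (I : Finset L) :
    (M.contract I).gens = M.liftedGens (I.sup id ⊔ M.z) := rfl

theorem Minor.gens_subset_liftedGens {T N : GEL L} (h : T.Minor N) :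
    N.gens ⊆ T.liftedGens N.z := by
  induction h with
  | refl => exact T.gens_subset_liftedGens
  | tail _ hstep ih =>
    obtain ⟨I, -, rfl | rfl⟩ := hstep
    · exact sdiff_subset.trans ih
    · intro g hg
      obtain ⟨hne, hg'⟩ := mem_erase.mp hg
      obtain ⟨h, hh, rfl⟩ := mem_image.mp hg'
      exact sup_mem_liftedGens le_sup_right (ih hh) hne

theorem minor_of_subset_liftedGens {T N : GEL L} (hz : N.z ∈ T.carrier)
    (hN : N.gens ⊆ T.liftedGens N.z) : T.Minor N := by
  obtain ⟨X, hX, hXz⟩ := mem_image.mp hz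
  have hcontract : Step T (T.contract X) := ⟨X, mem_powerset.mp hX, Or.inr rfl⟩
  have hgens : (T.contract X).gens = T.liftedGens N.z := by rw [contract_gens, hXz]
  have hdelete : Step (T.contract X) N := by
    refine ⟨(T.contract X).gens \ N.gens, sdiff_subset, Or.inl (ext hXz.symm ?_)⟩
    change N.gens = (T.contract X).gens \ ((T.contract X).gens \ N.gens)
    rw [sdiff_sdiff_self_left, inter_eq_right.mpr (hgens ▸ hN)]
  exact Relation.ReflTransGen.head hcontract (.single hdelete)

theorem mrank_eq_zero_iff {T : GEL L} {p : MP T} : mrank T p = 0 ↔ p = none := by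
  cases p <;> simp [mrank]

theorem card_mrank_eq_zero (T : GEL L) : Nat.card {p : MP T // mrank T p = 0} = 1 := by
  rw [Nat.card_congr (Equiv.subtypeEquivRight fun _ => mrank_eq_zero_iff), Nat.card_unique]

noncomputable def mrankSuccEquiv (T : GEL L) (hcar : ∀ ℓ : L, ℓ ∈ T.carrier) (m : ℕ) :
    {p : MP T // mrank T p = m + 1} ≃ Σ ℓ : L, (T.liftedGens ℓ).powersetCard m where
  toFun
    | ⟨none, h⟩ => absurd h (Nat.succ_ne_zero m).symm
    | ⟨some A, h⟩ =>
      ⟨A.1.z, A.1.gens, mem_powersetCard.mpr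
        ⟨A.2.gens_subset_liftedGens, Nat.succ_injective h⟩⟩
  invFun x :=
    have hx := mem_powersetCard.mp x.2.2
    ⟨some ⟨⟨x.1, x.2.1, fun _ hg => lt_of_mem_liftedGens (hx.1 hg)⟩,
      minor_of_subset_liftedGens (hcar x.1) hx.1⟩, congrArg (· + 1) hx.2⟩
  left_inv
    | ⟨none, h⟩ => absurd h (Nat.succ_ne_zero m).symm
    | ⟨some _, _⟩ => rfl
  right_inv _ := rfl

end GEL

theorem Polynomial.coeff_one_add_X_mul_sum_one_add_X_pow {ι : Type*} (s : Finset ι)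
    (f : ι → ℕ) (m : ℕ) :
    (1 + X * ∑ i ∈ s, (1 + X : Polynomial ℤ) ^ f i).coeff (m + 1) =
      ∑ i ∈ s, ((f i).choose m : ℤ) := by
  simp [coeff_X_mul, finsetSum_coeff, coeff_one_add_X_pow, coeff_one]

/-- The rank generating function of the minor poset:
`F(M(L,G); q) = 1 + q ∑_{ℓ ∈ L} (1+q)^{α(ℓ)}` with
`α(ℓ) = |{g ∨ ℓ : g ∈ G} \ {ℓ}|`, stated coefficientwise: the number of
elements of `M(L,G)` of rank `k` is the `k`-th coefficient of the right-hand
side. -/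
theorem minorPoset_rank_generating_function {L : Type*} [Lattice L] [OrderBot L]
    [DecidableEq L] [Fintype L] (T : GEL L) (hcar : ∀ ℓ : L, ℓ ∈ T.carrier) :
    ∀ k : ℕ,
      (Nat.card {p : GEL.MP T // GEL.mrank T p = k} : ℤ) =
        ((1 + Polynomial.X *
            ∑ ℓ : L, (1 + Polynomial.X : Polynomial ℤ) ^
              (((T.gens.image fun g => g ⊔ ℓ).erase ℓ).card)).coeff k) := by
  rintro (_ | m)
  · simp [GEL.card_mrank_eq_zero]
  · rw [Polynomial.coeff_one_add_X_mul_sum_one_add_X_pow,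
      Nat.card_congr (GEL.mrankSuccEquiv T hcar m), Nat.card_sigma]
    simp only [Nat.card_eq_fintype_card, Fintype.card_coe, card_powersetCard]
    push_cast
    rfl
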